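/- Let μ be a probability distribution and f₁, f₂ : ℝ^d → ℝ₊ measurable with Z₁ = ∫ f₁ dμ ∈ (0,∞) and Z₂ = ∫ f₂ dμ ∈ (0,∞), and let ν₁, ν₂ be the distributions with dν₁/dμ ∝ f₁ and dν₂/dμ ∝ f₂. Then D_KL(ν₁ ‖ ν₂) ≤ (Z₂/Z₁²) ∫ (f₁ − f₂)²/f₂ dμ. -/

import Mathlib

/-!
For `ν₁ ≪ ν₂` with `r = dν₁/dν₂`, the inequality `log t ≤ t - 1` gives
`KL(ν₁‖ν₂) = ∫ log r dν₁ ≤ ∫ r dν₁ - 1`, which is the χ² divergence of the normalized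
densities `pᵢ = fᵢ/Zᵢ`, i.e. `∫ p₁²/p₂ dμ - 1`. Expanding the square,
`∫ (f₁ - f₂)²/f₂ = ∫ f₁²/f₂ - 2 Z₁ + Z₂`, so the claimed bound exceeds this χ² divergence by
exactly `(1 - Z₂/Z₁)² ≥ 0`. The logarithm is integrable because `|log t| ≤ t + t⁻¹` and
`r⁻¹ = dν₂/dν₁` has `ν₁`-integral at most `1`.
-/

open MeasureTheory
open scoped ENNReal

-- Kullback–Leibler divergence: `∫ log (dν₁/dν₂) dν₁` when `ν₁ ≪ ν₂` (and the
-- logarithm of the density is `ν₁`-integrable), and `+∞` otherwise.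
open scoped Classical in
noncomputable def klDiv {α : Type*} [MeasurableSpace α] (ν₁ ν₂ : Measure α) : EReal :=
  if ν₁ ≪ ν₂ ∧ Integrable (fun x => Real.log (ν₁.rnDeriv ν₂ x).toReal) ν₁ then
    ((∫ x, Real.log (ν₁.rnDeriv ν₂ x).toReal ∂ν₁ : ℝ) : EReal)
  else ⊤

/-- The probability measure with density proportional to `f` with respect to `μ`. -/
noncomputable def normWithDensity {α : Type*} [MeasurableSpace α] (μ : Measure α)
    (f : α → ℝ) : Measure α :=
  (ENNReal.ofReal (∫ x, f x ∂μ))⁻¹ • μ.withDensity (fun x => ENNReal.ofReal (f x))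

lemma Real.abs_log_le_add_inv {t : ℝ} (ht : 0 < t) : |Real.log t| ≤ t + t⁻¹ := by
  have h_inv := Real.log_le_sub_one_of_pos (inv_pos.2 ht)
  rw [Real.log_inv] at h_inv
  rw [abs_le]
  constructor <;> linarith [Real.log_le_sub_one_of_pos ht, inv_pos.2 ht]

section ChiSquare

variable {α : Type*} [MeasurableSpace α] {ν₁ ν₂ : Measure α}

lemma integrable_toReal_rnDeriv (hχ : ∫⁻ x, ν₁.rnDeriv ν₂ x ∂ν₁ ≠ ∞) :
    Integrable (fun x => (ν₁.rnDeriv ν₂ x).toReal) ν₁ :=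
  integrable_toReal_of_lintegral_ne_top (Measure.measurable_rnDeriv _ _).aemeasurable hχ

lemma integrable_llr_of_lintegral_rnDeriv_ne_top [SigmaFinite ν₁] [IsFiniteMeasure ν₂]
    (hac : ν₁ ≪ ν₂) (hχ : ∫⁻ x, ν₁.rnDeriv ν₂ x ∂ν₁ ≠ ∞) : Integrable (llr ν₁ ν₂) ν₁ := by
  have h_inv : Integrable (fun x => (ν₂.rnDeriv ν₁ x).toReal) ν₁ :=
    integrable_toReal_of_lintegral_ne_top (Measure.measurable_rnDeriv _ _).aemeasurable
      (Measure.lintegral_rnDeriv_le.trans_lt (measure_lt_top _ _)).ne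
  refine ((integrable_toReal_rnDeriv hχ).add h_inv).mono'
    (measurable_llr _ _).aestronglyMeasurable ?_
  filter_upwards [Measure.rnDeriv_pos hac, hac.ae_le (Measure.rnDeriv_lt_top ν₁ ν₂),
    Measure.inv_rnDeriv hac] with x h_pos h_lt h_eq
  rw [Real.norm_eq_abs, llr, Pi.add_apply, ← h_eq, Pi.inv_apply, ENNReal.toReal_inv]
  exact Real.abs_log_le_add_inv (ENNReal.toReal_pos h_pos.ne' h_lt.ne)

lemma klDiv_le_toReal_lintegral_rnDeriv_sub_one [IsProbabilityMeasure ν₁] [IsFiniteMeasure ν₂]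
    (hac : ν₁ ≪ ν₂) (hχ : ∫⁻ x, ν₁.rnDeriv ν₂ x ∂ν₁ ≠ ∞) :
    klDiv ν₁ ν₂ ≤ (((∫⁻ x, ν₁.rnDeriv ν₂ x ∂ν₁).toReal - 1 : ℝ) : EReal) := by
  rw [klDiv, if_pos ⟨hac, integrable_llr_of_lintegral_rnDeriv_ne_top hac hχ⟩,
    EReal.coe_le_coe_iff]
  calc ∫ x, Real.log (ν₁.rnDeriv ν₂ x).toReal ∂ν₁
      ≤ ∫ x, ((ν₁.rnDeriv ν₂ x).toReal - 1) ∂ν₁ := by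
        refine integral_mono_ae (integrable_llr_of_lintegral_rnDeriv_ne_top hac hχ)
          ((integrable_toReal_rnDeriv hχ).sub (integrable_const 1)) ?_
        filter_upwards [Measure.rnDeriv_pos hac, hac.ae_le (Measure.rnDeriv_lt_top ν₁ ν₂)]
          with x h_pos h_lt
        exact Real.log_le_sub_one_of_pos (ENNReal.toReal_pos h_pos.ne' h_lt.ne)
    _ = (∫⁻ x, ν₁.rnDeriv ν₂ x ∂ν₁).toReal - 1 := by
        rw [integral_sub (integrable_toReal_rnDeriv hχ) (integrable_const 1),
          integral_toReal (Measure.measurable_rnDeriv _ _).aemeasurable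
            (hac.ae_le (Measure.rnDeriv_lt_top ν₁ ν₂))]
        simp

end ChiSquare

section WithDensity

variable {α : Type*} [MeasurableSpace α] {μ : Measure α} {p q : α → ℝ≥0∞}

lemma withDensity_eq_withDensity_withDensity_div (hp : Measurable p) (hq : Measurable q)
    (hq_top : ∀ᵐ x ∂μ, q x ≠ ∞) (hpq : ∀ᵐ x ∂μ, q x = 0 → p x = 0) :
    μ.withDensity p = (μ.withDensity q).withDensity (p / q) := by
  rw [← withDensity_mul μ hq (hp.div hq)]
  refine withDensity_congr_ae ?_
  filter_upwards [hq_top, hpq] with x h_top h_zero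
  rcases eq_or_ne (q x) 0 with h | h
  · simp [h, h_zero h]
  · exact (ENNReal.mul_div_cancel h h_top).symm

lemma withDensity_absolutelyContinuous_withDensity (hp : Measurable p) (hq : Measurable q)
    (hq_top : ∀ᵐ x ∂μ, q x ≠ ∞) (hpq : ∀ᵐ x ∂μ, q x = 0 → p x = 0) :
    μ.withDensity p ≪ μ.withDensity q := by
  rw [withDensity_eq_withDensity_withDensity_div hp hq hq_top hpq]
  exact withDensity_absolutelyContinuous _ _

lemma lintegral_rnDeriv_withDensity [SigmaFinite (μ.withDensity q)] (hp : Measurable p)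
    (hq : Measurable q) (hq_top : ∀ᵐ x ∂μ, q x ≠ ∞) (hpq : ∀ᵐ x ∂μ, q x = 0 → p x = 0) :
    ∫⁻ x, (μ.withDensity p).rnDeriv (μ.withDensity q) x ∂μ.withDensity p
      = ∫⁻ x, p x ^ 2 / q x ∂μ := by
  have h_rnDeriv : (μ.withDensity p).rnDeriv (μ.withDensity q)
      =ᵐ[μ.withDensity q] p / q := by
    rw [withDensity_eq_withDensity_withDensity_div hp hq hq_top hpq]
    exact Measure.rnDeriv_withDensity _ (hp.div hq)
  rw [lintegral_congr_ae
      ((withDensity_absolutelyContinuous_withDensity hp hq hq_top hpq).ae_eq h_rnDeriv),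
    lintegral_withDensity_eq_lintegral_mul μ hp (hp.div hq)]
  simp only [Pi.mul_apply, Pi.div_apply, sq, mul_div_assoc]

end WithDensity

section NormWithDensity

variable {α : Type*} [MeasurableSpace α] {μ : Measure α} {f f₁ f₂ : α → ℝ}

lemma normWithDensity_eq_withDensity (hZ : 0 < ∫ x, f x ∂μ) :
    normWithDensity μ f
      = μ.withDensity (fun x => (ENNReal.ofReal (∫ x, f x ∂μ))⁻¹ * ENNReal.ofReal (f x)) :=
  (withDensity_smul' _ _ (ENNReal.inv_ne_top.2 (ENNReal.ofReal_pos.2 hZ).ne')).symm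

lemma isProbabilityMeasure_normWithDensity (hf : 0 ≤ᵐ[μ] f) (hZ : 0 < ∫ x, f x ∂μ) :
    IsProbabilityMeasure (normWithDensity μ f) := by
  constructor
  rw [normWithDensity, Measure.smul_apply, withDensity_apply _ MeasurableSet.univ,
    setLIntegral_univ, ← ofReal_integral_eq_lintegral_ofReal (.of_integral_ne_zero hZ.ne') hf,
    smul_eq_mul, ENNReal.inv_mul_cancel (ENNReal.ofReal_pos.2 hZ).ne' ENNReal.ofReal_ne_top]

lemma ae_mul_ofReal_eq_zero_imp (hf₂_nonneg : 0 ≤ᵐ[μ] f₂)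
    (h_supp : ∀ᵐ x ∂μ, f₂ x = 0 → f₁ x = 0) (c₁ : ℝ≥0∞) {c₂ : ℝ≥0∞} (hc₂ : c₂ ≠ 0) :
    ∀ᵐ x ∂μ, c₂ * ENNReal.ofReal (f₂ x) = 0 → c₁ * ENNReal.ofReal (f₁ x) = 0 := by
  filter_upwards [hf₂_nonneg, h_supp] with x h_nonneg h_imp h_zero
  rw [mul_eq_zero, or_iff_right hc₂, ENNReal.ofReal_eq_zero] at h_zero
  simp [h_imp (le_antisymm h_zero h_nonneg)]

lemma normWithDensity_absolutelyContinuous (hf₁ : Measurable f₁) (hf₂ : Measurable f₂)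
    (hf₂_nonneg : 0 ≤ᵐ[μ] f₂) (hZ₁ : 0 < ∫ x, f₁ x ∂μ) (hZ₂ : 0 < ∫ x, f₂ x ∂μ)
    (h_supp : ∀ᵐ x ∂μ, f₂ x = 0 → f₁ x = 0) :
    normWithDensity μ f₁ ≪ normWithDensity μ f₂ := by
  have hc₂ : (ENNReal.ofReal (∫ x, f₂ x ∂μ))⁻¹ ≠ ∞ :=
    ENNReal.inv_ne_top.2 (ENNReal.ofReal_pos.2 hZ₂).ne'
  rw [normWithDensity_eq_withDensity hZ₁, normWithDensity_eq_withDensity hZ₂]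
  exact withDensity_absolutelyContinuous_withDensity (by fun_prop) (by fun_prop)
    (.of_forall fun _ => ENNReal.mul_ne_top hc₂ ENNReal.ofReal_ne_top)
    (ae_mul_ofReal_eq_zero_imp hf₂_nonneg h_supp _ (ENNReal.inv_ne_zero.2 ENNReal.ofReal_ne_top))

lemma lintegral_rnDeriv_normWithDensity (hf₁ : Measurable f₁) (hf₂ : Measurable f₂)
    (hf₂_nonneg : 0 ≤ᵐ[μ] f₂) (hZ₁ : 0 < ∫ x, f₁ x ∂μ) (hZ₂ : 0 < ∫ x, f₂ x ∂μ)
    (h_supp : ∀ᵐ x ∂μ, f₂ x = 0 → f₁ x = 0) :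
    ∫⁻ x, (normWithDensity μ f₁).rnDeriv (normWithDensity μ f₂) x ∂normWithDensity μ f₁
      = ENNReal.ofReal ((∫ x, f₂ x ∂μ) / (∫ x, f₁ x ∂μ) ^ 2)
        * ∫⁻ x, ENNReal.ofReal (f₁ x) ^ 2 / ENNReal.ofReal (f₂ x) ∂μ := by
  have hc₂ : (ENNReal.ofReal (∫ x, f₂ x ∂μ))⁻¹ ≠ ∞ :=
    ENNReal.inv_ne_top.2 (ENNReal.ofReal_pos.2 hZ₂).ne'
  have := isProbabilityMeasure_normWithDensity hf₂_nonneg hZ₂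
  rw [normWithDensity_eq_withDensity hZ₂] at this
  rw [normWithDensity_eq_withDensity hZ₁, normWithDensity_eq_withDensity hZ₂,
    lintegral_rnDeriv_withDensity (by fun_prop) (by fun_prop)
      (.of_forall fun _ => ENNReal.mul_ne_top hc₂ ENNReal.ofReal_ne_top)
      (ae_mul_ofReal_eq_zero_imp hf₂_nonneg h_supp _ (ENNReal.inv_ne_zero.2 ENNReal.ofReal_ne_top)),
    ← lintegral_const_mul' _ _ ENNReal.ofReal_ne_top]
  refine lintegral_congr fun x => ?_
  rw [mul_pow, ENNReal.mul_div_mul_comm (Or.inr ENNReal.ofReal_ne_top) (Or.inl hc₂)]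
  congr 1
  rw [ENNReal.div_eq_inv_mul, inv_inv, ENNReal.ofReal_div_of_pos (by positivity),
    ENNReal.ofReal_pow hZ₁.le, div_eq_mul_inv, ENNReal.inv_pow]

end NormWithDensity

section ChiSquareIntegrand

lemma ENNReal.ofReal_sub_sq_div_add_two_mul {s t : ℝ} (hs : 0 ≤ s) (ht : 0 ≤ t)
    (hts : t = 0 → s = 0) :
    ENNReal.ofReal ((s - t) ^ 2) / ENNReal.ofReal t + 2 * ENNReal.ofReal s
      = ENNReal.ofReal s ^ 2 / ENNReal.ofReal t + ENNReal.ofReal t := by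
  rcases ht.eq_or_lt with rfl | ht
  · simp [hts rfl]
  rw [← ENNReal.ofReal_pow hs, ← ENNReal.ofReal_div_of_pos ht, ← ENNReal.ofReal_div_of_pos ht,
    ← ENNReal.ofReal_ofNat 2, ← ENNReal.ofReal_mul zero_le_two,
    ← ENNReal.ofReal_add (by positivity) (by positivity),
    ← ENNReal.ofReal_add (by positivity) ht.le]
  congr 1
  field_simp
  ring

variable {α : Type*} [MeasurableSpace α] {μ : Measure α} {f₁ f₂ : α → ℝ}

lemma ae_eq_zero_imp_eq_zero_of_lintegral_ne_top (hf₁ : Measurable f₁) (hf₂ : Measurable f₂)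
    (hI : ∫⁻ x, ENNReal.ofReal ((f₁ x - f₂ x) ^ 2) / ENNReal.ofReal (f₂ x) ∂μ ≠ ∞) :
    ∀ᵐ x ∂μ, f₂ x = 0 → f₁ x = 0 := by
  filter_upwards [ae_lt_top (by fun_prop) hI] with x h_lt h_zero
  by_contra h_ne
  rw [h_zero, sub_zero, ENNReal.ofReal_zero,
    ENNReal.div_zero (ENNReal.ofReal_pos.2 (by positivity)).ne'] at h_lt
  exact h_lt.ne rfl

lemma lintegral_sub_sq_div_add_two_mul (hf₁ : Measurable f₁) (hf₂ : Measurable f₂)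
    (hf₁_nonneg : 0 ≤ᵐ[μ] f₁) (hf₂_nonneg : 0 ≤ᵐ[μ] f₂) (hf₁_int : Integrable f₁ μ)
    (hf₂_int : Integrable f₂ μ) (h_supp : ∀ᵐ x ∂μ, f₂ x = 0 → f₁ x = 0) :
    ∫⁻ x, ENNReal.ofReal ((f₁ x - f₂ x) ^ 2) / ENNReal.ofReal (f₂ x) ∂μ
        + 2 * ENNReal.ofReal (∫ x, f₁ x ∂μ)
      = ∫⁻ x, ENNReal.ofReal (f₁ x) ^ 2 / ENNReal.ofReal (f₂ x) ∂μ
        + ENNReal.ofReal (∫ x, f₂ x ∂μ) := by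
  rw [ofReal_integral_eq_lintegral_ofReal hf₁_int hf₁_nonneg,
    ofReal_integral_eq_lintegral_ofReal hf₂_int hf₂_nonneg,
    ← lintegral_const_mul 2 (by fun_prop), ← lintegral_add_left (by fun_prop),
    ← lintegral_add_left (by fun_prop)]
  refine lintegral_congr_ae ?_
  filter_upwards [hf₁_nonneg, hf₂_nonneg, h_supp] with x h₁ h₂ h_imp
  exact ENNReal.ofReal_sub_sq_div_add_two_mul h₁ h₂ h_imp

end ChiSquareIntegrand

lemma ENNReal.toReal_ofReal_div_sq_mul_sub_one_le {I J : ℝ≥0∞} {a b : ℝ} (ha : 0 < a)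
    (hb : 0 ≤ b) (hI : I ≠ ∞) (hJ : J ≠ ∞) (h : I + 2 * ENNReal.ofReal a = J + ENNReal.ofReal b) :
    (ENNReal.ofReal (b / a ^ 2) * J).toReal - 1 ≤ (ENNReal.ofReal (b / a ^ 2) * I).toReal := by
  have h_real : I.toReal + 2 * a = J.toReal + b := by
    have := congrArg ENNReal.toReal h
    rwa [ENNReal.toReal_add hI (by finiteness), ENNReal.toReal_add hJ ENNReal.ofReal_ne_top,
      ENNReal.toReal_mul, ENNReal.toReal_ofNat, ENNReal.toReal_ofReal ha.le,
      ENNReal.toReal_ofReal hb] at this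
  -- `(1 - b / a) ^ 2 ≥ 0`
  have h_const : b / a ^ 2 * (2 * a - b) ≤ 1 := by
    rw [div_mul_eq_mul_div, div_le_one (by positivity)]
    nlinarith [sq_nonneg (a - b)]
  rw [ENNReal.toReal_mul, ENNReal.toReal_mul, ENNReal.toReal_ofReal (by positivity)]
  linear_combination h_const - b / a ^ 2 * h_real


theorem kl_le_chiSq_general (d : ℕ) (μ : Measure (Fin d → ℝ))
    (f₁ f₂ : (Fin d → ℝ) → ℝ) (hf₁ : Measurable f₁) (hf₂ : Measurable f₂)
    (hf₁0 : ∀ x, 0 ≤ f₁ x) (hf₂0 : ∀ x, 0 ≤ f₂ x)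
    (hZ₁ : 0 < ∫ x, f₁ x ∂μ) (hZ₂ : 0 < ∫ x, f₂ x ∂μ) :
    klDiv (normWithDensity μ f₁) (normWithDensity μ f₂)
      ≤ (((ENNReal.ofReal ((∫ x, f₂ x ∂μ) / (∫ x, f₁ x ∂μ) ^ 2)) *
          ∫⁻ x, ENNReal.ofReal ((f₁ x - f₂ x) ^ 2) / ENNReal.ofReal (f₂ x) ∂μ
          : ℝ≥0∞) : EReal) := by
  set I := ∫⁻ x, ENNReal.ofReal ((f₁ x - f₂ x) ^ 2) / ENNReal.ofReal (f₂ x) ∂μ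
  set J := ∫⁻ x, ENNReal.ofReal (f₁ x) ^ 2 / ENNReal.ofReal (f₂ x) ∂μ
  rcases eq_or_ne I ∞ with hI | hI
  · simp [hI, ENNReal.mul_top, hZ₁, hZ₂]
  have h_supp := ae_eq_zero_imp_eq_zero_of_lintegral_ne_top hf₁ hf₂ hI
  have h_IJ := lintegral_sub_sq_div_add_two_mul hf₁ hf₂ (.of_forall hf₁0) (.of_forall hf₂0)
    (.of_integral_ne_zero hZ₁.ne') (.of_integral_ne_zero hZ₂.ne') h_supp
  have hJ : J ≠ ∞ := ne_top_of_le_ne_top (by finiteness) (le_self_add.trans h_IJ.symm.le)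
  have := isProbabilityMeasure_normWithDensity (.of_forall hf₁0) hZ₁
  have := isProbabilityMeasure_normWithDensity (.of_forall hf₂0) hZ₂
  have h_chi := lintegral_rnDeriv_normWithDensity hf₁ hf₂ (.of_forall hf₂0) hZ₁ hZ₂ h_supp
  have h_kl := klDiv_le_toReal_lintegral_rnDeriv_sub_one
    (normWithDensity_absolutelyContinuous hf₁ hf₂ (.of_forall hf₂0) hZ₁ hZ₂ h_supp)
    (h_chi ▸ ENNReal.mul_ne_top ENNReal.ofReal_ne_top hJ)
  rw [h_chi] at h_kl
  calc klDiv (normWithDensity μ f₁) (normWithDensity μ f₂)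
    _ ≤ _ := h_kl
    _ ≤ _ := EReal.coe_le_coe_iff.2
      (ENNReal.toReal_ofReal_div_sq_mul_sub_one_le hZ₁ hZ₂.le hI hJ h_IJ)
    _ = _ := EReal.coe_ennreal_toReal (ENNReal.mul_ne_top ENNReal.ofReal_ne_top hI)

/-- **KL bounded by a χ²-type quantity.**
If `dν₁/dμ ∝ f₁` and `dν₂/dμ ∝ f₂` with normalizing constants
`Z₁ = ∫ f₁ dμ ∈ (0,∞)` and `Z₂ = ∫ f₂ dμ ∈ (0,∞)`, then
`D_KL(ν₁‖ν₂) ≤ (Z₂/Z₁²) ∫ (f₁−f₂)²/f₂ dμ`, where the integrand is `+∞`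
wherever `f₂ = 0 < f₁` (the right-hand side is computed in `ℝ≥0∞`). -/
theorem kl_le_chiSq (d : ℕ) (μ : Measure (Fin d → ℝ)) [IsProbabilityMeasure μ]
    (f₁ f₂ : (Fin d → ℝ) → ℝ) (hf₁ : Measurable f₁) (hf₂ : Measurable f₂)
    (hf₁0 : ∀ x, 0 ≤ f₁ x) (hf₂0 : ∀ x, 0 ≤ f₂ x)
    (hZ₁ : 0 < ∫ x, f₁ x ∂μ) (hZ₂ : 0 < ∫ x, f₂ x ∂μ)
    (hf₁Int : Integrable f₁ μ) (hf₂Int : Integrable f₂ μ) :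
    klDiv (normWithDensity μ f₁) (normWithDensity μ f₂)
      ≤ (((ENNReal.ofReal ((∫ x, f₂ x ∂μ) / (∫ x, f₁ x ∂μ) ^ 2)) *
          ∫⁻ x, ENNReal.ofReal ((f₁ x - f₂ x) ^ 2) / ENNReal.ofReal (f₂ x) ∂μ
          : ℝ≥0∞) : EReal) :=
  kl_le_chiSq_general d μ f₁ f₂ hf₁ hf₂ hf₁0 hf₂0 hZ₁ hZ₂
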